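/- For every natural number n, C(2n,n) * ∑_{k=0}^n C(2k,k)^2 * C(2(n-k), n-k) * 4^(n-k) = ∑_{k=0}^n C(4k,2k) * C(2k,k)^2 * C(k, n-k) * (-64)^(n-k). -/

import Mathlib

/-!
Creative telescoping (Zeilberger's algorithm). For both summands `F n k`, for `k < n`,
`a n * F n k + b n * F (n + 1) k + c n * F (n + 2) k = R n (k + 1) * F n (k + 1) - R n k * F n k`
with the same polynomial coefficients
`a n = 1024 (n + 1) (2n + 1) (2n + 3)`, `b n = -8 (2n + 3) (8n² + 24n + 19)`, `c n = (n + 2)³`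
and a rational certificate `R` for each side. Each identity is checked by rewriting every binomial
as a rational multiple of a few base binomials. Summing over `k`, both sides satisfy the same
second-order recurrence, whose leading coefficient never vanishes, and they agree for `n = 0, 1`.
-/

open Finset Nat

section Recurrence

variable {R : Type*} [CommRing R]

theorem sum_recurrence_of_telescoping {n : ℕ} {a b c : R} {p q r g : ℕ → R}
    (hstep : ∀ k < n, a * p k + b * q k + c * r k = g (k + 1) - g k) (hg : g 0 = 0)
    (hbd : g n + a * p n + b * (q n + q (n + 1)) + c * (r n + r (n + 1) + r (n + 2)) = 0) :
    a * ∑ k ∈ range (n + 1), p k + b * ∑ k ∈ range (n + 2), q k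
      + c * ∑ k ∈ range (n + 3), r k = 0 := by
  have htel : ∑ k ∈ range n, (a * p k + b * q k + c * r k) = g n := by
    rw [sum_congr rfl fun k hk => hstep k (mem_range.mp hk), sum_range_sub, hg, sub_zero]
  simp only [sum_range_succ, sum_add_distrib, ← mul_sum] at htel ⊢
  linear_combination htel + hbd

theorem eq_of_second_order_recurrence [IsDomain R] {a b c u v : ℕ → R} (hc : ∀ n, c n ≠ 0)
    (hu : ∀ n, a n * u n + b n * u (n + 1) + c n * u (n + 2) = 0)
    (hv : ∀ n, a n * v n + b n * v (n + 1) + c n * v (n + 2) = 0)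
    (h0 : u 0 = v 0) (h1 : u 1 = v 1) : u = v := by
  have key : ∀ n, u n = v n ∧ u (n + 1) = v (n + 1) := by
    intro n
    induction n with
    | zero => exact ⟨h0, h1⟩
    | succ n ih =>
      refine ⟨ih.2, mul_left_cancel₀ (hc n) ?_⟩
      linear_combination hu n - hv n - a n * ih.1 - b n * ih.2
  exact funext fun n => (key n).1

end Recurrence

section CastChoose

variable {K : Type*} [Field K] [CharZero K]

theorem cast_centralBinom_succ (m : ℕ) :
    (centralBinom (m + 1) : K) = 2 * (2 * m + 1) / (m + 1) * centralBinom m := by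
  rw [div_mul_eq_mul_div, eq_div_iff m.cast_add_one_ne_zero, mul_comm]
  exact_mod_cast succ_mul_centralBinom_succ m

theorem cast_centralBinom_two_mul_succ (m : ℕ) :
    (centralBinom (2 * (m + 1)) : K)
      = 4 * (4 * m + 1) * (4 * m + 3) / ((2 * m + 1) * (2 * m + 2)) * centralBinom (2 * m) := by
  have h1 : (2 * m + 1 : K) ≠ 0 := by exact_mod_cast (2 * m).succ_ne_zero
  have h2 : (2 * m + 1 + 1 : K) ≠ 0 := by exact_mod_cast (2 * m + 1).succ_ne_zero
  rw [show 2 * (m + 1) = 2 * m + 1 + 1 by ring, cast_centralBinom_succ, cast_centralBinom_succ]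
  push_cast
  field_simp
  ring

theorem cast_choose_succ_right (m r : ℕ) :
    (m.choose (r + 1) : K) = (m - r) / (r + 1) * m.choose r := by
  rcases le_or_gt r m with h | h
  · rw [div_mul_eq_mul_div, eq_div_iff r.cast_add_one_ne_zero, mul_comm _ (m.choose r : K),
      ← Nat.cast_sub h]
    exact_mod_cast choose_succ_right_eq m r
  · simp [choose_eq_zero_of_lt h, choose_eq_zero_of_lt (h.trans (lt_succ_self r))]

theorem cast_choose_succ_eq (m r : ℕ) :
    (m.choose (r + 1) : K) = (m - r) / (m + 1) * (m + 1).choose (r + 1) := by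
  rcases le_or_gt r m with h | h
  · have key := choose_mul_succ_eq m (r + 1)
    rw [Nat.add_sub_add_right] at key
    rw [div_mul_eq_mul_div, eq_div_iff m.cast_add_one_ne_zero, ← Nat.cast_sub h,
      mul_comm _ ((m + 1).choose (r + 1) : K)]
    exact_mod_cast key
  · simp [choose_eq_zero_of_lt (lt_succ_of_lt h), choose_eq_zero_of_lt (succ_lt_succ h)]

end CastChoose

namespace CentralBinomIdentity

def lhsTerm (n k : ℕ) : ℚ :=
  centralBinom n * centralBinom k ^ 2 * centralBinom (n - k) * 4 ^ (n - k)

def rhsTerm (n k : ℕ) : ℚ :=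
  centralBinom (2 * k) * centralBinom k ^ 2 * k.choose (n - k) * (-64) ^ (n - k)

def coeffA (n : ℕ) : ℚ := 1024 * (n + 1) * (2 * n + 1) * (2 * n + 3)

def coeffB (n : ℕ) : ℚ := -8 * (2 * n + 3) * (8 * n ^ 2 + 24 * n + 19)

def coeffC (n : ℕ) : ℚ := (n + 2) ^ 3

/- The certificates are only evaluated at `k ≤ n`; writing `n - k` in `ℕ` in the denominators
makes their positivity visible to `field_simp`. -/
def lhsCert (n k : ℕ) : ℚ :=
  256 * k ^ 2 * (2 * n + 1) * (2 * n + 3) * (2 * n - 2 * k + 1)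
    / ((n + 1) * ((n - k : ℕ) + 1) * ((n - k : ℕ) + 2))

def rhsCert (n k : ℕ) : ℚ :=
  -4096 * k ^ 2 * (n + 2) * (n - 2 * k) * (n - 2 * k + 1)
    / (((n - k : ℕ) + 1) * ((n - k : ℕ) + 2))

theorem lhsTerm_telescope {n k : ℕ} (hk : k < n) :
    coeffA n * lhsTerm n k + coeffB n * lhsTerm (n + 1) k + coeffC n * lhsTerm (n + 2) k
      = lhsCert n (k + 1) * lhsTerm n (k + 1) - lhsCert n k * lhsTerm n k := by
  obtain ⟨j, rfl⟩ : ∃ j, n = k + j + 1 := ⟨n - k - 1, by omega⟩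
  simp only [lhsTerm, coeffA, coeffB, coeffC, lhsCert]
  rw [show k + j + 1 - k = j + 1 by omega, show k + j + 1 + 1 - k = j + 1 + 1 by omega,
    show k + j + 1 + 2 - k = j + 1 + 1 + 1 by omega, show k + j + 1 - (k + 1) = j by omega,
    show k + j + 1 + 2 = k + j + 1 + 1 + 1 by omega]
  simp only [cast_centralBinom_succ]
  push_cast
  field_simp
  ring

theorem lhsTerm_boundary (n : ℕ) :
    lhsCert n n * lhsTerm n n + coeffA n * lhsTerm n n
      + coeffB n * (lhsTerm (n + 1) n + lhsTerm (n + 1) (n + 1))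
      + coeffC n * (lhsTerm (n + 2) n + lhsTerm (n + 2) (n + 1) + lhsTerm (n + 2) (n + 2)) = 0 := by
  simp only [lhsTerm, coeffA, coeffB, coeffC, lhsCert, Nat.sub_self, Nat.add_sub_cancel_left,
    Nat.reduceSubDiff, cast_centralBinom_succ, centralBinom_zero]
  push_cast
  field_simp
  ring

theorem rhsTerm_telescope {n k : ℕ} (hk : k < n) :
    coeffA n * rhsTerm n k + coeffB n * rhsTerm (n + 1) k + coeffC n * rhsTerm (n + 2) k
      = rhsCert n (k + 1) * rhsTerm n (k + 1) - rhsCert n k * rhsTerm n k := by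
  obtain ⟨j, rfl⟩ : ∃ j, n = k + j + 1 := ⟨n - k - 1, by omega⟩
  simp only [rhsTerm, coeffA, coeffB, coeffC, rhsCert]
  -- Reducing to `(k + 1).choose j` rather than `k.choose j` keeps every rewrite valid for `j > k`.
  rw [show k + j + 1 - k = j + 1 by omega, show k + j + 1 + 1 - k = j + 1 + 1 by omega,
    show k + j + 1 + 2 - k = j + 1 + 1 + 1 by omega, show k + j + 1 - (k + 1) = j by omega,
    cast_choose_succ_right k (j + 1 + 1), cast_choose_succ_right k (j + 1),
    cast_choose_succ_eq k j, cast_choose_succ_right (k + 1) j, cast_centralBinom_two_mul_succ,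
    cast_centralBinom_succ]
  push_cast
  field_simp
  ring

theorem rhsTerm_boundary (n : ℕ) :
    rhsCert n n * rhsTerm n n + coeffA n * rhsTerm n n
      + coeffB n * (rhsTerm (n + 1) n + rhsTerm (n + 1) (n + 1))
      + coeffC n * (rhsTerm (n + 2) n + rhsTerm (n + 2) (n + 1) + rhsTerm (n + 2) (n + 2)) = 0 := by
  simp only [rhsTerm, coeffA, coeffB, coeffC, rhsCert, Nat.sub_self, Nat.add_sub_cancel_left,
    Nat.reduceSubDiff, cast_centralBinom_two_mul_succ, cast_centralBinom_succ, choose_zero_right,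
    choose_one_right, Nat.cast_choose_two]
  push_cast
  field_simp
  ring

def lhsSum (n : ℕ) : ℚ := ∑ k ∈ range (n + 1), lhsTerm n k

def rhsSum (n : ℕ) : ℚ := ∑ k ∈ range (n + 1), rhsTerm n k

theorem lhsSum_recurrence (n : ℕ) :
    coeffA n * lhsSum n + coeffB n * lhsSum (n + 1) + coeffC n * lhsSum (n + 2) = 0 :=
  sum_recurrence_of_telescoping (g := fun k => lhsCert n k * lhsTerm n k)
    (fun _ hk => lhsTerm_telescope hk) (by simp [lhsCert]) (lhsTerm_boundary n)

theorem rhsSum_recurrence (n : ℕ) :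
    coeffA n * rhsSum n + coeffB n * rhsSum (n + 1) + coeffC n * rhsSum (n + 2) = 0 :=
  sum_recurrence_of_telescoping (g := fun k => rhsCert n k * rhsTerm n k)
    (fun _ hk => rhsTerm_telescope hk) (by simp [rhsCert]) (rhsTerm_boundary n)

theorem lhsSum_eq_rhsSum : lhsSum = rhsSum :=
  eq_of_second_order_recurrence (fun n => by unfold coeffC; positivity) lhsSum_recurrence
    rhsSum_recurrence (by norm_num [lhsSum, rhsSum, lhsTerm, rhsTerm])
    (by norm_num [lhsSum, rhsSum, lhsTerm, rhsTerm, sum_range_succ, cast_centralBinom_succ])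

end CentralBinomIdentity

open CentralBinomIdentity

theorem stmt_4 (n : ℕ) :
    (Nat.choose (2 * n) n : ℤ) *
      ∑ k ∈ Finset.range (n + 1),
        ((Nat.choose (2 * k) k : ℤ) ^ 2 * (Nat.choose (2 * (n - k)) (n - k)) * 4 ^ (n - k))
    = ∑ k ∈ Finset.range (n + 1),
      ((Nat.choose (4 * k) (2 * k) : ℤ) * (Nat.choose (2 * k) k) ^ 2 *
        (Nat.choose k (n - k)) * (-64) ^ (n - k)) := by
  rw [← Int.cast_inj (α := ℚ)]
  push_cast
  convert congr_fun lhsSum_eq_rhsSum n using 1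
  · rw [lhsSum, mul_sum]
    exact sum_congr rfl fun k _ => by simp only [lhsTerm, centralBinom_eq_two_mul_choose]; ring
  · refine sum_congr rfl fun k _ => ?_
    rw [rhsTerm, centralBinom_eq_two_mul_choose, centralBinom_eq_two_mul_choose,
      show 2 * (2 * k) = 4 * k by ring]
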